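/- arXiv:cs/0610144 — 3 statements merged into one kernel-verified Lean document; each statement's English description precedes it below -/
import Mathlib

section
/- Suppose R = log m > H(p). Then for every E < E_UN(R) there exists a constant K > 0 such that for every n ≥ 1 and every integer Δ with 0 ≤ Δ ≤ n−1, the probability that there exist an index l with 1 ≤ l ≤ n−Δ and a string x̃ ∈ X^n lying in the same bin as the source string x^n, with x̃ agreeing with x^n in the first l−1 positions, x̃_l ≠ x_l, and Ĥ(x̃_l^n) ≤ Ĥ(x_l^n), is at most K·exp(−Δ·E). -/
/-!
An error at position `l` needs a string that first differs from the source at `l`, lies in its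
bin and has a suffix of no larger empirical entropy. With `k = n + 1 - l`, such a string shares
the source's bin in `k` independently drawn bin indices, which happens with probability
`m⁻ᵏ = e^{-kR}`, and by the method of types there are at most `poly(k) e^{k Ĥ}` candidate suffixes
of entropy `≤ Ĥ`; so given the source, the error probability at `l` is at most
`poly(k) e^{-k |R - Ĥ|⁺}`. A source suffix of type `q` has probability `e^{-k (H(q) + D(q‖p))}`,
so averaging over it gives `poly(k) e^{-k E_UN(R)}`. For `E < E_UN(R)` the polynomial is absorbed
into `e^{k (E_UN(R) - E)}`, and the union bound over `l ≤ n - Δ`, i.e. `k ≥ Δ + 1`, is a geometric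
tail of size `O(e^{-ΔE})`.
-/

open Classical
open scoped BigOperators

noncomputable section

/-- `q` is a probability mass function on `Z`. -/
def IsPMF {Z : Type*} [Fintype Z] (q : Z → ℝ) : Prop :=
  (∀ z, 0 ≤ q z) ∧ ∑ z, q z = 1

/-- The probability of the event `A` on a finite outcome space with weights `P`. -/
def prob {Ω : Type*} [Fintype Ω] (P : Ω → ℝ) (A : Ω → Prop) : ℝ :=
  ∑ ω, if A ω then P ω else 0

/-- A causal random binning scheme of length `n` with `m` bins: the `j`-th bin index of a
string is a function of its length-`(j+1)` prefix. -/
abbrev BinScheme (X : Type*) (n m : ℕ) : Type _ :=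
  (j : Fin n) → (Fin (j.val + 1) → X) → Fin m

/-- The length-`(j+1)` prefix of a string of length `n`. -/
def pref {X : Type*} {n : ℕ} (w : Fin n → X) (j : Fin n) : Fin (j.val + 1) → X :=
  fun i => w ⟨i.val, lt_of_le_of_lt (Nat.lt_succ_iff.mp i.isLt) j.isLt⟩

/-- Two strings lie in the same bin iff all their bin indices agree. -/
def sameBin {X : Type*} {n m : ℕ} (b : BinScheme X n m) (w x : Fin n → X) : Prop :=
  ∀ j : Fin n, b j (pref w j) = b j (pref x j)

/-- Shannon entropy in nats. -/
def entropy {Z : Type*} [Fintype Z] (q : Z → ℝ) : ℝ :=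
  - ∑ z, q z * Real.log (q z)

/-- Absolute continuity of `q` with respect to `p`. -/
def AbsCont {Z : Type*} (q p : Z → ℝ) : Prop := ∀ z, p z = 0 → q z = 0

/-- Kullback–Leibler divergence in nats (real-valued formula; it agrees with the usual
extended-valued divergence whenever `AbsCont q p` holds, and the extended-valued
divergence is `+∞` otherwise, so infima of `D(q‖p) + …` over all pmfs `q` coincide
with infima of this real-valued quantity over absolutely continuous pmfs `q`). -/
def klDiv {Z : Type*} [Fintype Z] (q p : Z → ℝ) : ℝ :=
  ∑ z, q z * Real.log (q z / p z)

/-- `E_UN(R) = inf_q [D(q‖p) + |R − H(q)|⁺]`, the infimum over pmfs `q` (equivalently,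
over absolutely continuous pmfs `q`, since otherwise `D(q‖p) = +∞`). -/
def EUN {X : Type*} [Fintype X] (p : X → ℝ) (R : ℝ) : ℝ :=
  sInf ((fun q : X → ℝ => klDiv q p + max (R - entropy q) 0) ''
    {q | IsPMF q ∧ AbsCont q p})

/-- The type (empirical distribution) of a string. -/
def typeOf {X : Type*} [Fintype X] [DecidableEq X] {k : ℕ} (w : Fin k → X) : X → ℝ :=
  fun a => ((Finset.univ.filter fun i => w i = a).card : ℝ) / (k : ℝ)

/-- Empirical entropy: the entropy of the type of `w`. -/
def empEntropy {X : Type*} [Fintype X] [DecidableEq X] {k : ℕ} (w : Fin k → X) : ℝ :=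
  entropy (typeOf w)

/-- The substring `w_a^b` (1-indexed, inclusive endpoints). -/
def substr {X : Type*} {n : ℕ} (w : Fin n → X) (a b : ℕ) (h : 1 ≤ a ∧ b ≤ n) :
    Fin (b + 1 - a) → X :=
  fun i => w ⟨a - 1 + i.val, by have := i.isLt; omega⟩

/-- `w` agrees with `x` in the first `l-1` positions and, when `l ≤ n`, differs from `x`
at (1-indexed) position `l`.  When `l = n+1` this says `w = x`. -/
def divergesAt {X : Type*} {n : ℕ} (w x : Fin n → X) (l : ℕ) (hl : 1 ≤ l) : Prop :=
  (∀ i : Fin n, (i : ℕ) + 1 < l → w i = x i) ∧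
    ∀ h : l ≤ n, w ⟨l - 1, by omega⟩ ≠ x ⟨l - 1, by omega⟩

open Finset Real

lemma exists_add_one_pow_le_mul_exp (c : ℕ) {δ : ℝ} (hδ : 0 < δ) :
    ∃ C > 0, ∀ x : ℝ, 0 ≤ x → (x + 1) ^ c ≤ C * exp (δ * x) := by
  refine ⟨c.factorial / δ ^ c * exp δ, by positivity, fun x hx => ?_⟩
  calc (x + 1) ^ c = c.factorial / δ ^ c * ((δ * (x + 1)) ^ c / c.factorial) := by
        rw [mul_pow]
        field_simp
    _ ≤ c.factorial / δ ^ c * exp (δ * (x + 1)) := by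
        gcongr
        exact pow_div_factorial_le_exp _ (by positivity) c
    _ = _ := by rw [mul_add, mul_one, exp_add]; ring

lemma sum_Icc_pow_sub_le {r : ℝ} (hr0 : 0 ≤ r) (hr1 : r < 1) {n Δ : ℕ} (hΔ : Δ ≤ n) :
    ∑ l ∈ Icc 1 (n - Δ), r ^ (n + 1 - l) ≤ r ^ (Δ + 1) / (1 - r) := by
  rw [← Ico_add_one_right_eq_Icc, sum_Ico_reflect _ _ (by omega),
    show n + 1 + 1 - (n - Δ + 1) = Δ + 1 by omega]
  exact geom_sum_Ico_le_of_lt_one hr0 hr1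

section Types

variable {X : Type*} [DecidableEq X] {k : ℕ}

def letterCount (w : Fin k → X) (a : X) : ℕ := #{i | w i = a}

lemma letterCount_le (w : Fin k → X) (a : X) : letterCount w a ≤ k :=
  (card_filter_le _ _).trans_eq (card_fin k)

lemma prod_comp_eq_prod_pow_letterCount [Fintype X] {M : Type*} [CommMonoid M] (w : Fin k → X)
    (f : X → M) : ∏ i, f (w i) = ∏ a, f a ^ letterCount w a := by
  unfold letterCount
  rw [prod_comp]
  refine prod_subset (subset_univ _) fun a _ ha => ?_
  rw [filter_eq_empty_iff.mpr fun i _ (hi : w i = a) =>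
    ha (hi ▸ mem_image_of_mem w (mem_univ i))]
  simp

lemma exists_eq_of_letterCount_ne_zero {w : Fin k → X} {a : X} (ha : letterCount w a ≠ 0) :
    ∃ i, w i = a := by
  obtain ⟨i, -, hi⟩ := filter_nonempty_iff.mp (card_ne_zero.mp ha)
  exact ⟨i, hi⟩

variable [Fintype X]

lemma typeOf_apply (w : Fin k → X) (a : X) : typeOf w a = letterCount w a / k := rfl

lemma sum_letterCount (w : Fin k → X) : ∑ a, letterCount w a = k := by
  simpa [letterCount] using
    (card_eq_sum_card_fiberwise (s := univ) (t := univ) fun i _ => mem_univ (w i)).symm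

lemma typeOf_nonneg (w : Fin k → X) (a : X) : 0 ≤ typeOf w a := by
  rw [typeOf_apply]; positivity

lemma typeOf_pos (w : Fin k → X) {a : X} (ha : letterCount w a ≠ 0) : 0 < typeOf w a := by
  have : k ≠ 0 := by have := letterCount_le w a; omega
  rw [typeOf_apply]; positivity

lemma isPMF_typeOf (hk : k ≠ 0) (w : Fin k → X) : IsPMF (typeOf w) := by
  refine ⟨typeOf_nonneg w, ?_⟩
  simp_rw [typeOf_apply, ← sum_div, ← Nat.cast_sum, sum_letterCount]
  exact div_self (by exact_mod_cast hk)

lemma prod_comp_eq_exp (w : Fin k → X) {f : X → ℝ} (hf : ∀ a, letterCount w a ≠ 0 → 0 < f a) :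
    ∏ i, f (w i) = exp (k * ∑ a, typeOf w a * log (f a)) := by
  rw [prod_comp_eq_prod_pow_letterCount, mul_sum, exp_sum]
  refine prod_congr rfl fun a _ => ?_
  by_cases ha : letterCount w a = 0
  · simp [typeOf_apply, ha]
  · have hk : (k : ℝ) ≠ 0 := by have := letterCount_le w a; exact_mod_cast (by omega : k ≠ 0)
    rw [typeOf_apply, ← mul_assoc, mul_div_cancel₀ _ hk, exp_nat_mul, exp_log (hf a ha)]

lemma prod_typeOf_self (w : Fin k → X) :
    ∏ i, typeOf w (w i) = exp (-k * empEntropy w) := by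
  rw [prod_comp_eq_exp w fun a => typeOf_pos w, empEntropy, entropy]
  ring_nf

lemma card_filter_typeOf_eq_le (hk : k ≠ 0) (w : Fin k → X) :
    (#{v : Fin k → X | typeOf v = typeOf w} : ℝ) ≤ exp (k * empEntropy w) := by
  have hclass : ∀ v ∈ ({v | typeOf v = typeOf w} : Finset (Fin k → X)),
      exp (-k * empEntropy w) = ∏ i, typeOf w (v i) := fun v hv => by
    rw [← (mem_filter.mp hv).2, prod_typeOf_self, empEntropy, empEntropy, (mem_filter.mp hv).2]
  have hsum : ∑ v : Fin k → X, ∏ i, typeOf w (v i) = 1 := by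
    rw [← Fintype.sum_pow, (isPMF_typeOf hk w).2, one_pow]
  have : (#{v : Fin k → X | typeOf v = typeOf w} : ℝ) * exp (-k * empEntropy w) ≤ 1 := by
    rw [← nsmul_eq_mul, ← sum_const, sum_congr rfl hclass, ← hsum]
    exact sum_le_sum_of_subset_of_nonneg (filter_subset _ _)
      fun v _ _ => prod_nonneg fun i _ => typeOf_nonneg w (v i)
  rwa [neg_mul, exp_neg, ← div_eq_mul_inv, div_le_one (exp_pos _)] at this

lemma card_image_typeOf_le :
    #(univ.image (typeOf : (Fin k → X) → X → ℝ)) ≤ (k + 1) ^ Fintype.card X := by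
  have hfactor : univ.image (typeOf : (Fin k → X) → X → ℝ) =
      (univ.image fun w : Fin k → X => fun a => (⟨letterCount w a, Nat.lt_succ_of_le
        (letterCount_le w a)⟩ : Fin (k + 1))).image fun c a => (c a : ℝ) / k := by
    rw [image_image]; rfl
  rw [hfactor]
  calc _ ≤ #(univ : Finset (X → Fin (k + 1))) := card_image_le.trans (card_le_univ _)
    _ = (k + 1) ^ Fintype.card X := by simp

lemma sum_exp_neg_mul_empEntropy_le (hk : k ≠ 0) :
    ∑ w : Fin k → X, exp (-k * empEntropy w) ≤ ((k : ℝ) + 1) ^ Fintype.card X := by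
  rw [← sum_fiberwise_of_maps_to fun w _ => mem_image_of_mem typeOf (mem_univ w)]
  calc _ ≤ ∑ _q ∈ univ.image (typeOf : (Fin k → X) → X → ℝ), (1 : ℝ) := by
        refine sum_le_sum fun q hq => ?_
        obtain ⟨w, -, rfl⟩ := mem_image.mp hq
        have hclass : ∀ v ∈ ({v | typeOf v = typeOf w} : Finset (Fin k → X)),
            exp (-k * empEntropy v) = exp (-k * empEntropy w) := fun v hv => by
          rw [empEntropy, empEntropy, (mem_filter.mp hv).2]
        rw [sum_congr rfl hclass, sum_const, nsmul_eq_mul, neg_mul, exp_neg, ← div_eq_mul_inv,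
          div_le_one (exp_pos _)]
        exact card_filter_typeOf_eq_le hk w
    _ ≤ ((k : ℝ) + 1) ^ Fintype.card X := by
        rw [sum_const, nsmul_one]; exact_mod_cast card_image_typeOf_le

lemma card_filter_empEntropy_le (hk : k ≠ 0) (h : ℝ) :
    (#{w : Fin k → X | empEntropy w ≤ h} : ℝ) ≤
      ((k : ℝ) + 1) ^ Fintype.card X * exp (k * h) := by
  rw [natCast_card_filter, mul_comm]
  calc _ ≤ ∑ w : Fin k → X, exp (k * h) * exp (-k * empEntropy w) := by
        refine sum_le_sum fun w _ => ?_
        split_ifs with hw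
        · rw [← exp_add]
          exact one_le_exp (by nlinarith [(k.cast_nonneg : (0 : ℝ) ≤ k)])
        · positivity
    _ ≤ _ := by
        rw [← mul_sum]
        exact mul_le_mul_of_nonneg_left (sum_exp_neg_mul_empEntropy_le hk) (exp_pos _).le

end Types

section Divergence

variable {X : Type*} [Fintype X]

lemma klDiv_nonneg {q p : X → ℝ} (hq : IsPMF q) (hp : IsPMF p) (hqp : AbsCont q p) :
    0 ≤ klDiv q p := by
  have hterm : ∀ a, q a * log (q a / p a) =
      p a * InformationTheory.klFun (q a / p a) + (q a - p a) := fun a => by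
    by_cases hpa : p a = 0
    · simp [hpa, hqp a hpa]
    · rw [InformationTheory.klFun_apply]; field_simp; ring
  have hsum : klDiv q p = ∑ a, p a * InformationTheory.klFun (q a / p a) := by
    rw [klDiv, sum_congr rfl fun a _ => hterm a, sum_add_distrib, sum_sub_distrib, hq.2, hp.2,
      sub_self, add_zero]
  rw [hsum]
  exact sum_nonneg fun a _ =>
    mul_nonneg (hp.1 a) (InformationTheory.klFun_nonneg (div_nonneg (hq.1 a) (hp.1 a)))

lemma EUN_le {p q : X → ℝ} (hp : IsPMF p) (hq : IsPMF q) (hqp : AbsCont q p) (R : ℝ) :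
    EUN p R ≤ klDiv q p + max (R - entropy q) 0 := by
  refine csInf_le ⟨0, ?_⟩ ⟨q, ⟨hq, hqp⟩, rfl⟩
  rintro _ ⟨q', ⟨hq', hq'p⟩, rfl⟩
  exact add_nonneg (klDiv_nonneg hq' hp hq'p) (le_max_right _ _)

variable [DecidableEq X] {k : ℕ} {p : X → ℝ}

lemma absCont_typeOf {w : Fin k → X} (hw : ∀ i, p (w i) ≠ 0) : AbsCont (typeOf w) p := by
  intro a hpa
  by_cases ha : letterCount w a = 0
  · simp [typeOf_apply, ha]
  · obtain ⟨i, rfl⟩ := exists_eq_of_letterCount_ne_zero ha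
    exact absurd hpa (hw i)

lemma prod_eq_exp_neg_mul_empEntropy_add_klDiv (hp : IsPMF p) {w : Fin k → X}
    (hw : ∀ i, p (w i) ≠ 0) :
    ∏ i, p (w i) = exp (-k * (empEntropy w + klDiv (typeOf w) p)) := by
  have hpos : ∀ a, letterCount w a ≠ 0 → 0 < p a := fun a ha => by
    obtain ⟨i, rfl⟩ := exists_eq_of_letterCount_ne_zero ha
    exact (hp.1 _).lt_of_ne' (hw i)
  have hterm : ∀ a, typeOf w a * log (p a) =
      typeOf w a * log (typeOf w a) - typeOf w a * log (typeOf w a / p a) := fun a => by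
    by_cases ha : letterCount w a = 0
    · simp [typeOf_apply, ha]
    · rw [log_div (typeOf_pos w ha).ne' (hpos a ha).ne']; ring
  rw [prod_comp_eq_exp w hpos, sum_congr rfl fun a _ => hterm a, sum_sub_distrib, empEntropy,
    entropy, klDiv]
  ring_nf

lemma sum_prod_mul_exp_neg_posPart_le (hk : k ≠ 0) (hp : IsPMF p) (R : ℝ) :
    ∑ w : Fin k → X, (∏ i, p (w i)) * exp (-k * max (R - empEntropy w) 0) ≤
      ((k : ℝ) + 1) ^ Fintype.card X * exp (-k * EUN p R) := by
  have hterm : ∀ w : Fin k → X, (∏ i, p (w i)) * exp (-k * max (R - empEntropy w) 0) ≤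
      exp (-k * empEntropy w) * exp (-k * EUN p R) := fun w => by
    by_cases hzero : ∃ i, p (w i) = 0
    · obtain ⟨i, hi⟩ := hzero
      rw [prod_eq_zero (mem_univ i) hi, zero_mul]
      positivity
    · have hw : ∀ i, p (w i) ≠ 0 := fun i hi => hzero ⟨i, hi⟩
      have hEUN := EUN_le hp (isPMF_typeOf hk w) (absCont_typeOf hw) R
      rw [prod_eq_exp_neg_mul_empEntropy_add_klDiv hp hw, ← exp_add, ← exp_add, exp_le_exp]
      have : (0 : ℝ) ≤ k := k.cast_nonneg
      simp only [empEntropy] at hEUN ⊢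
      nlinarith
  calc _ ≤ ∑ w : Fin k → X, exp (-k * empEntropy w) * exp (-k * EUN p R) :=
        sum_le_sum fun w _ => hterm w
    _ ≤ _ := by
        rw [← sum_mul]
        exact mul_le_mul_of_nonneg_right (sum_exp_neg_mul_empEntropy_le hk) (exp_pos _).le

end Divergence

section Binning

lemma card_subtype_apply_eq_apply_mul {D : Type*} [Fintype D] [DecidableEq D] {m : ℕ} {u v : D}
    (huv : u ≠ v) :
    Fintype.card {f : D → Fin m // f u = f v} * m = m ^ Fintype.card D := by
  let e : {f : D → Fin m // f u = f v} ≃ ({d : D // d ≠ v} → Fin m) :=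
    { toFun := fun f d => f.1 d
      invFun := fun g => ⟨fun d => if h : d = v then g ⟨u, huv⟩ else g ⟨d, h⟩, by simp [huv]⟩
      left_inv := fun f => Subtype.ext <| funext fun d => by
        by_cases h : d = v
        · subst h; simp [← f.2]
        · simp [h]
      right_inv := fun g => funext fun d => by simp [d.2] }
  have hD : 0 < Fintype.card D := Fintype.card_pos_iff.mpr ⟨v⟩
  rw [Fintype.card_congr e, Fintype.card_fun, Fintype.card_subtype_compl, Fintype.card_subtype_eq,
    Fintype.card_fin, ← pow_succ, Nat.sub_add_cancel hD]

variable {X : Type*} [Fintype X] [DecidableEq X] {n m : ℕ}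

lemma card_sameBin_eq_prod (w x : Fin n → X) :
    Fintype.card {b : BinScheme X n m // sameBin b w x} =
      ∏ j : Fin n,
        Fintype.card {f : (Fin (j + 1) → X) → Fin m // f (pref w j) = f (pref x j)} := by
  rw [← Fintype.card_pi]
  exact Fintype.card_congr (Equiv.subtypePiEquivPi
    (p := fun (j : Fin n) (f : (Fin (j + 1) → X) → Fin m) => f (pref w j) = f (pref x j)))

lemma card_sameBin_mul_pow_le {l : ℕ} (hl : 1 ≤ l) (hln : l ≤ n) {w x : Fin n → X}
    (hne : w ⟨l - 1, by omega⟩ ≠ x ⟨l - 1, by omega⟩) :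
    #{b : BinScheme X n m | sameBin b w x} * m ^ (n + 1 - l) ≤
      Fintype.card (BinScheme X n m) := by
  set a : Fin n := ⟨l - 1, by omega⟩
  have hpow : m ^ (n + 1 - l) = ∏ j, if j ∈ Ici a then m else 1 := by
    rw [prod_ite_mem, univ_inter, prod_const, Fin.card_Ici]
    congr 1
    simp only [a]
    omega
  rw [← Fintype.card_subtype, card_sameBin_eq_prod, hpow, ← prod_mul_distrib, Fintype.card_pi]
  refine prod_le_prod' fun j _ => ?_
  split_ifs with hj
  · have hpref : pref w j ≠ pref x j := fun h =>
      hne (congrFun h ⟨l - 1, Nat.lt_succ_of_le (Fin.le_def.mp (mem_Ici.mp hj))⟩)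
    rw [card_subtype_apply_eq_apply_mul hpref]
    simp
  · rw [mul_one]
    exact Fintype.card_subtype_le _

end Binning

section Probability

variable {Ω : Type*} [Fintype Ω] {P : Ω → ℝ}

lemma prob_exists_mem_le {ι : Type*} (hP : ∀ ω, 0 ≤ P ω) (s : Finset ι) (A : ι → Ω → Prop) :
    prob P (fun ω => ∃ i ∈ s, A i ω) ≤ ∑ i ∈ s, prob P (A i) := by
  unfold prob
  rw [sum_comm]
  refine sum_le_sum fun ω _ => ?_
  have hterm : ∀ i ∈ s, 0 ≤ if A i ω then P ω else 0 := fun i _ => by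
    split_ifs
    exacts [hP ω, le_rfl]
  split_ifs with h
  · obtain ⟨i, hi, hA⟩ := h
    calc P ω = if A i ω then P ω else 0 := (if_pos hA).symm
      _ ≤ _ := single_le_sum hterm hi
  · exact sum_nonneg hterm

lemma prob_prod_eq_sum {α β : Type*} [Fintype α] [Fintype β] (P : α → ℝ) (A : α × β → Prop) :
    prob (fun ω : α × β => P ω.1 / Fintype.card β) A =
      ∑ a, P a * (#{b | A (a, b)} / Fintype.card β) := by
  unfold prob
  rw [Fintype.sum_prod_type]
  refine sum_congr rfl fun a _ => ?_
  dsimp only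
  rw [← sum_filter, sum_const, nsmul_eq_mul]
  ring

lemma prob_prod_le_one {α β : Type*} [Fintype α] [Fintype β] {P : α → ℝ} (hP : ∀ a, 0 ≤ P a)
    (hsum : ∑ a, P a = 1) (A : α × β → Prop) :
    prob (fun ω : α × β => P ω.1 / Fintype.card β) A ≤ 1 := by
  rw [prob_prod_eq_sum, ← hsum]
  refine sum_le_sum fun a _ => mul_le_of_le_one_right (hP a) ?_
  exact div_le_one_of_le₀ (by exact_mod_cast card_le_univ _) (Nat.cast_nonneg _)

end Probability

section Suffix

variable {X : Type*}

lemma substr_injOn {n : ℕ} {x : Fin n → X} {l : ℕ} (hl : 1 ≤ l) :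
    Set.InjOn (fun w => substr w l n ⟨hl, le_rfl⟩) {w | divergesAt w x l hl} := by
  intro w₁ hw₁ w₂ hw₂ hsub
  funext i
  by_cases hi : (i : ℕ) + 1 < l
  · rw [hw₁.1 i hi, hw₂.1 i hi]
  · have := congrFun hsub ⟨i - (l - 1), by omega⟩
    simp only [substr] at this
    convert this using 2 <;> ext <;> simp <;> omega

variable [Fintype X]

lemma sum_prod_mul_comp_suffix {p : X → ℝ} (hp : ∑ a, p a = 1) {c k n : ℕ} (h : c + k = n)
    (g : (Fin k → X) → ℝ) :
    ∑ x : Fin n → X, (∏ i, p (x i)) * g (fun i => x ⟨c + i, by omega⟩) =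
      ∑ y : Fin k → X, (∏ i, p (y i)) * g y := by
  subst h
  have hsuffix : ∀ (u : Fin c → X) (y : Fin k → X),
      (fun i : Fin k => Fin.append u y ⟨c + i, by omega⟩) = y :=
    fun u y => funext fun i => Fin.append_right u y i
  have hprefix : ∑ u : Fin c → X, ∏ i, p (u i) = 1 := by rw [← Fintype.sum_pow, hp, one_pow]
  rw [← (Fin.appendEquiv c k).sum_comp, Fintype.sum_prod_type]
  simp only [Fin.appendEquiv_apply, Fin.prod_univ_add, Fin.append_left, Fin.append_right, hsuffix]
  simp_rw [mul_assoc, ← mul_sum, ← sum_mul, hprefix, one_mul]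

end Suffix

section Competitors

variable {X : Type*} [Fintype X] [DecidableEq X] {n m : ℕ}

def HasCompetitorAt (b : BinScheme X n m) (x : Fin n → X) (l : ℕ) : Prop :=
  ∃ hl : 1 ≤ l, ∃ w : Fin n → X, sameBin b w x ∧ divergesAt w x l hl ∧
    empEntropy (substr w l n ⟨hl, le_rfl⟩) ≤ empEntropy (substr x l n ⟨hl, le_rfl⟩)

lemma card_hasCompetitorAt_mul_pow_le {l : ℕ} (hl : 1 ≤ l) (hln : l ≤ n) (x : Fin n → X) :
    #{b : BinScheme X n m | HasCompetitorAt b x l} * m ^ (n + 1 - l) ≤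
      #{w | divergesAt w x l hl ∧
        empEntropy (substr w l n ⟨hl, le_rfl⟩) ≤ empEntropy (substr x l n ⟨hl, le_rfl⟩)} *
      Fintype.card (BinScheme X n m) := by
  set S : Finset (Fin n → X) := {w | divergesAt w x l hl ∧
    empEntropy (substr w l n ⟨hl, le_rfl⟩) ≤ empEntropy (substr x l n ⟨hl, le_rfl⟩)}
  calc _ ≤ (∑ w ∈ S, #{b : BinScheme X n m | sameBin b w x}) * m ^ (n + 1 - l) := by
        gcongr
        refine (card_le_card fun b (hb : b ∈ filter _ univ) => ?_).trans card_biUnion_le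
        obtain ⟨_, w, hsame, hdiv, hH⟩ := (mem_filter.mp hb).2
        exact mem_biUnion.mpr ⟨w, mem_filter.mpr ⟨mem_univ _, hdiv, hH⟩,
          mem_filter.mpr ⟨mem_univ _, hsame⟩⟩
    _ ≤ ∑ _w ∈ S, Fintype.card (BinScheme X n m) := by
        rw [sum_mul]
        exact sum_le_sum fun w (hw : w ∈ S) =>
          card_sameBin_mul_pow_le hl hln ((mem_filter.mp hw).2.1.2 hln)
    _ = _ := by rw [sum_const, smul_eq_mul]

lemma card_competitors_le {l : ℕ} (hl : 1 ≤ l) (hln : l ≤ n) (x : Fin n → X) :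
    (#{w | divergesAt w x l hl ∧
        empEntropy (substr w l n ⟨hl, le_rfl⟩) ≤ empEntropy (substr x l n ⟨hl, le_rfl⟩)} : ℝ) ≤
      (((n + 1 - l : ℕ) : ℝ) + 1) ^ Fintype.card X *
        exp ((n + 1 - l : ℕ) * empEntropy (substr x l n ⟨hl, le_rfl⟩)) := by
  set S : Finset (Fin n → X) := {w | divergesAt w x l hl ∧
    empEntropy (substr w l n ⟨hl, le_rfl⟩) ≤ empEntropy (substr x l n ⟨hl, le_rfl⟩)}
  refine le_trans ?_ (card_filter_empEntropy_le (by omega) _)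
  exact_mod_cast card_le_card_of_injOn _
    (fun w (hw : w ∈ S) => mem_filter.mpr ⟨mem_univ _, (mem_filter.mp hw).2.2⟩)
    ((substr_injOn hl).mono fun w (hw : w ∈ S) => (mem_filter.mp hw).2.1)

lemma card_hasCompetitorAt_le (hm : 0 < m) {l : ℕ} (hl : 1 ≤ l) (hln : l ≤ n) (x : Fin n → X) :
    (#{b : BinScheme X n m | HasCompetitorAt b x l} : ℝ) ≤ Fintype.card (BinScheme X n m) *
      ((((n + 1 - l : ℕ) : ℝ) + 1) ^ Fintype.card X *
        exp (-(n + 1 - l : ℕ) * max (log m - empEntropy (substr x l n ⟨hl, le_rfl⟩)) 0)) := by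
  set k := n + 1 - l
  set h := empEntropy (substr x l n ⟨hl, le_rfl⟩)
  set B := Fintype.card (BinScheme X n m)
  set N := #{b : BinScheme X n m | HasCompetitorAt b x l}
  set S := #{w | divergesAt w x l hl ∧ empEntropy (substr w l n ⟨hl, le_rfl⟩) ≤ h}
  have hpoly : 1 ≤ ((k : ℝ) + 1) ^ Fintype.card X :=
    one_le_pow₀ (le_add_of_nonneg_left k.cast_nonneg)
  rcases le_total (log m - h) 0 with hle | hgt
  · rw [max_eq_right hle, mul_zero, exp_zero, mul_one]
    calc (N : ℝ) ≤ B := by exact_mod_cast card_le_univ _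
      _ ≤ _ := le_mul_of_one_le_right (Nat.cast_nonneg _) hpoly
  · rw [max_eq_left hgt]
    have hmk : (m : ℝ) ^ k = exp (k * log m) := by
      rw [exp_nat_mul, exp_log (by exact_mod_cast hm)]
    calc (N : ℝ) = (N * m ^ k : ℕ) * exp (-(k * log m)) := by
          rw [Nat.cast_mul, Nat.cast_pow, hmk, mul_assoc, ← exp_add, add_neg_cancel, exp_zero,
            mul_one]
      _ ≤ (S * B : ℕ) * exp (-(k * log m)) :=
          mul_le_mul_of_nonneg_right (by exact_mod_cast card_hasCompetitorAt_mul_pow_le hl hln x)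
            (exp_pos _).le
      _ ≤ (((k : ℝ) + 1) ^ Fintype.card X * exp (k * h)) * B * exp (-(k * log m)) := by
          rw [Nat.cast_mul]; gcongr; exact card_competitors_le hl hln x
      _ = _ := by
          rw [show -(k : ℝ) * (log m - h) = k * h + -(k * log m) by ring, exp_add]
          ring

lemma prob_hasCompetitorAt_le {p : X → ℝ} (hp : IsPMF p) (hm : 0 < m) {l : ℕ} (hl : 1 ≤ l)
    (hln : l ≤ n) :
    prob (fun ω : (Fin n → X) × BinScheme X n m =>
        (∏ i, p (ω.1 i)) / (Fintype.card (BinScheme X n m) : ℝ))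
      (fun ω => HasCompetitorAt ω.2 ω.1 l) ≤
      (((n + 1 - l : ℕ) : ℝ) + 1) ^ (2 * Fintype.card X) *
        exp (-(n + 1 - l : ℕ) * EUN p (log m)) := by
  set k := n + 1 - l
  set c := Fintype.card X
  have hB : (0 : ℝ) < Fintype.card (BinScheme X n m) := by
    have : Nonempty (BinScheme X n m) := ⟨fun _ _ => ⟨0, hm⟩⟩
    exact_mod_cast Fintype.card_pos
  rw [prob_prod_eq_sum (fun x : Fin n → X => ∏ i, p (x i))]
  calc _ ≤ ∑ x : Fin n → X, ((k : ℝ) + 1) ^ c * ((∏ i, p (x i)) *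
          exp (-k * max (log m - empEntropy (substr x l n ⟨hl, le_rfl⟩)) 0)) := by
        refine sum_le_sum fun x _ => ?_
        rw [mul_left_comm]
        refine mul_le_mul_of_nonneg_left ?_ (prod_nonneg fun i _ => hp.1 _)
        rw [div_le_iff₀ hB, mul_comm]
        exact card_hasCompetitorAt_le hm hl hln x
    _ = ((k : ℝ) + 1) ^ c *
          ∑ y : Fin k → X, (∏ i, p (y i)) * exp (-k * max (log m - empEntropy y) 0) := by
        rw [← mul_sum]
        congr 1
        exact sum_prod_mul_comp_suffix hp.2 (by omega)
          fun y => exp (-k * max (log m - empEntropy y) 0)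
    _ ≤ ((k : ℝ) + 1) ^ c * (((k : ℝ) + 1) ^ c * exp (-k * EUN p (log m))) := by
        gcongr
        exact sum_prod_mul_exp_neg_posPart_le (by omega) hp _
    _ = _ := by ring

lemma exists_prob_hasCompetitorAt_le {p : X → ℝ} (hp : IsPMF p) (hm : 0 < m) {E : ℝ}
    (hE : E < EUN p (log m)) :
    ∃ C > 0, ∀ n l : ℕ, 1 ≤ l → l ≤ n →
      prob (fun ω : (Fin n → X) × BinScheme X n m =>
          (∏ i, p (ω.1 i)) / (Fintype.card (BinScheme X n m) : ℝ))
        (fun ω => HasCompetitorAt ω.2 ω.1 l) ≤ C * exp (-E) ^ (n + 1 - l) := by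
  obtain ⟨C, hC, hpoly⟩ := exists_add_one_pow_le_mul_exp (2 * Fintype.card X) (sub_pos.mpr hE)
  refine ⟨C, hC, fun n l hl hln => (prob_hasCompetitorAt_le hp hm hl hln).trans ?_⟩
  set k := n + 1 - l
  calc _ ≤ C * exp ((EUN p (log m) - E) * k) * exp (-k * EUN p (log m)) := by
        gcongr; exact hpoly k k.cast_nonneg
    _ = C * exp (-E) ^ k := by rw [mul_assoc, ← exp_add, ← exp_nat_mul]; ring_nf

end Competitors

theorem statement1_general {X : Type*} [Fintype X] [DecidableEq X]
    (p : X → ℝ) (hp : IsPMF p)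
    (m : ℕ) (hm : 2 ≤ m) (R : ℝ) (hR : R = Real.log m)
    (E : ℝ) (hE : E < EUN p R) :
    ∃ K : ℝ, 0 < K ∧
      ∀ n : ℕ, 1 ≤ n → ∀ Δ : ℕ, Δ ≤ n - 1 →
        prob
          (fun ω : (Fin n → X) × BinScheme X n m =>
            (∏ i, p (ω.1 i)) / (Fintype.card (BinScheme X n m) : ℝ))
          (fun ω => ∃ l : ℕ, ∃ hl1 : 1 ≤ l, ∃ _hl2 : l ≤ n - Δ,
            ∃ x' : Fin n → X,
              sameBin ω.2 x' ω.1 ∧ divergesAt x' ω.1 l hl1 ∧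
              empEntropy (substr x' l n ⟨hl1, le_rfl⟩) ≤
                empEntropy (substr ω.1 l n ⟨hl1, le_rfl⟩))
        ≤ K * Real.exp (-(Δ : ℝ) * E) := by
  subst hR
  rcases le_or_gt E 0 with hE0 | hE0
  · refine ⟨1, one_pos, fun n _ Δ _ => ?_⟩
    refine (prob_prod_le_one (fun x : Fin n → X => prod_nonneg fun i _ => hp.1 (x i))
      (by rw [← Fintype.sum_pow, hp.2, one_pow]) _).trans ?_
    rw [one_mul]
    exact one_le_exp (mul_nonneg_of_nonpos_of_nonpos (neg_nonpos.mpr Δ.cast_nonneg) hE0)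
  obtain ⟨C, hC, hbound⟩ := exists_prob_hasCompetitorAt_le hp (by omega) hE
  set r := exp (-E)
  have hr : r < 1 := exp_lt_one_iff.mpr (neg_lt_zero.mpr hE0)
  refine ⟨C * (r / (1 - r)), by have := exp_pos (-E); positivity, fun n _ Δ hΔ => ?_⟩
  set P := fun ω : (Fin n → X) × BinScheme X n m =>
    (∏ i, p (ω.1 i)) / (Fintype.card (BinScheme X n m) : ℝ)
  calc _ = prob P (fun ω => ∃ l ∈ Icc 1 (n - Δ), HasCompetitorAt ω.2 ω.1 l) := by
        congr 1
        ext ω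
        exact ⟨fun ⟨l, hl1, hl2, hw⟩ => ⟨l, mem_Icc.mpr ⟨hl1, hl2⟩, hl1, hw⟩,
          fun ⟨l, hl, hl1, hw⟩ => ⟨l, hl1, (mem_Icc.mp hl).2, hw⟩⟩
    _ ≤ ∑ l ∈ Icc 1 (n - Δ), C * r ^ (n + 1 - l) := by
        refine (prob_exists_mem_le (fun ω => div_nonneg (prod_nonneg fun i _ => hp.1 _)
          (Nat.cast_nonneg _)) _ _).trans (sum_le_sum fun l hl => ?_)
        exact hbound n l (mem_Icc.mp hl).1 (by have := (mem_Icc.mp hl).2; omega)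
    _ ≤ C * (r ^ (Δ + 1) / (1 - r)) := by
        rw [← mul_sum]
        gcongr
        exact sum_Icc_pow_sub_le (exp_pos _).le hr (by omega)
    _ = C * (r / (1 - r)) * exp (-Δ * E) := by
        rw [show -(Δ : ℝ) * E = Δ * -E by ring, exp_nat_mul, pow_succ]
        ring

/-- Streaming point-to-point coding, universal (minimum suffix-entropy) decoding
(Theorem 3). -/
theorem statement1 {X : Type*} [Fintype X] [DecidableEq X] [Nonempty X]
    (p : X → ℝ) (hp : IsPMF p)
    (m : ℕ) (hm : 2 ≤ m) (R : ℝ) (hR : R = Real.log m) (hRH : entropy p < R)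
    (E : ℝ) (hE : E < EUN p R) :
    ∃ K : ℝ, 0 < K ∧
      ∀ n : ℕ, 1 ≤ n → ∀ Δ : ℕ, Δ ≤ n - 1 →
        prob
          (fun ω : (Fin n → X) × BinScheme X n m =>
            (∏ i, p (ω.1 i)) / (Fintype.card (BinScheme X n m) : ℝ))
          (fun ω => ∃ l : ℕ, ∃ hl1 : 1 ≤ l, ∃ _hl2 : l ≤ n - Δ,
            ∃ x' : Fin n → X,
              sameBin ω.2 x' ω.1 ∧ divergesAt x' ω.1 l hl1 ∧
              empEntropy (substr x' l n ⟨hl1, le_rfl⟩) ≤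
                empEntropy (substr ω.1 l n ⟨hl1, le_rfl⟩))
        ≤ K * Real.exp (-(Δ : ℝ) * E) :=
  statement1_general p hp m hm R hR E hE
end
end

section
/- For every n ≥ 1 and every index l with 1 ≤ l ≤ n, the probability that there exists a string x̃ ∈ X^n lying in the same bin as the source string x^n, agreeing with x^n in the first l−1 positions, satisfying x̃_l ≠ x_l and p(x̃) ≥ p(x^n), is at most exp(−(n−l+1)·E_ML(R)). -/
open Classical
open scoped BigOperators

noncomputable section

/-- `E_ML(R) = sup_{ρ ∈ [0,1]} [ρR − (1+ρ) log Σ_x p(x)^{1/(1+ρ)}]`. -/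
def EML {X : Type*} [Fintype X] (p : X → ℝ) (R : ℝ) : ℝ :=
  sSup ((fun ρ : ℝ => ρ * R - (1 + ρ) * Real.log (∑ x, p x ^ (1 / (1 + ρ)))) ''
    Set.Icc 0 1)

/-!
Fix the source string `x`. A string `w` whose prefixes differ from those of `x` from position `l`
on lies in the bin of `x` with probability `m ^ (-(n - l + 1))`, because the bin indices of
distinct prefixes are independent and uniform. The union bound over the misleading strings `w`
(first diverging at `l`, with `p w ≥ p x`), Gallager's `min 1 t ≤ t ^ ρ`, and the count
`#{w} ≤ ∑ w, (p w / p x) ^ (1 / (1 + ρ))` turn the average over `x` into a product over the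
coordinates, equal to `exp (-(n - l + 1) * (ρ R - (1 + ρ) log ∑ a, p a ^ (1 / (1 + ρ))))`.
It remains to take the supremum over `ρ ∈ [0, 1]`.
-/

open Finset

lemma prob_prod_div_card {α β : Type*} [Fintype α] [Fintype β] (f : α → ℝ)
    (A : α → β → Prop) :
    prob (fun ω : α × β => f ω.1 / Fintype.card β) (fun ω => A ω.1 ω.2)
      = ∑ a, f a * (#{b | A a b} / Fintype.card β) := by
  rw [prob, Fintype.sum_prod_type]
  refine sum_congr rfl fun a _ => ?_
  simp only [sum_ite, sum_const_zero, add_zero, sum_const, nsmul_eq_mul]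
  ring

lemma prod_fin_ite_lt_one {M : Type*} [CommMonoid M] (n k : ℕ) (b : M) :
    (∏ j : Fin n, if (j : ℕ) < k then 1 else b) = b ^ (n - k) := by
  rw [Fin.prod_univ_eq_prod_range (fun i => if i < k then 1 else b), prod_ite,
    prod_const_one, one_mul, prod_const, filter_not, range_eq_Ico]
  congr 1
  rw [← Nat.card_Ico k n]
  congr 1
  ext i
  simp only [mem_sdiff, mem_Ico, mem_filter]
  omega

lemma card_filter_exists_le {α β : Type*} [Fintype β] (s : Finset α) (E : α → β → Prop) :
    #{b | ∃ a ∈ s, E a b} ≤ ∑ a ∈ s, #{b | E a b} := by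
  classical
  calc #{b | ∃ a ∈ s, E a b} = #(s.biUnion fun a => {b | E a b}) := by
        congr 1
        ext b
        simp
    _ ≤ _ := card_biUnion_le

lemma card_fun_apply_eq_apply_mul {D : Type*} [Fintype D] {a b : D} (hab : a ≠ b) (m : ℕ) :
    Fintype.card {g : D → Fin m // g a = g b} * m = Fintype.card (D → Fin m) := by
  classical
  have : Nonempty D := ⟨b⟩
  let e : {g : D → Fin m // g a = g b} ≃ ({j // j ≠ b} → Fin m) :=
    { toFun := fun g j => g.1 j
      invFun := fun h =>
        ⟨fun j => if hj : j = b then h ⟨a, hab⟩ else h ⟨j, hj⟩, by simp [hab]⟩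
      left_inv := fun g => by
        ext j
        by_cases hj : j = b
        · subst hj; simp [g.2]
        · simp [hj]
      right_inv := fun h => by
        funext j
        simp [j.2] }
  rw [Fintype.card_congr e, Fintype.card_fun, Fintype.card_fun, Fintype.card_fin,
    Fintype.card_subtype_compl, Fintype.card_subtype_eq, pow_sub_one_mul Fintype.card_pos.ne']

lemma sum_prod_filter_agree {X R : Type*} [Fintype X] [DecidableEq X] [CommSemiring R] {n : ℕ}
    (k : ℕ) (x : Fin n → X) (f : X → R) :
    ∑ w ∈ {w : Fin n → X | ∀ i : Fin n, (i : ℕ) < k → w i = x i}, ∏ i, f (w i)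
      = ∏ i : Fin n, if (i : ℕ) < k then f (x i) else ∑ a, f a := by
  have hpi : ({w : Fin n → X | ∀ i : Fin n, (i : ℕ) < k → w i = x i} : Finset _)
      = Fintype.piFinset fun i : Fin n => if (i : ℕ) < k then {x i} else univ := by
    ext w
    simp only [mem_filter, mem_univ, true_and, Fintype.mem_piFinset]
    refine forall_congr' fun i => ?_
    split_ifs with hi <;> simp [hi]
  rw [hpi, ← prod_univ_sum]
  refine prod_congr rfl fun i _ => ?_
  split_ifs <;> simp

lemma min_one_le_rpow {t ρ : ℝ} (ht : 0 ≤ t) (hρ0 : 0 ≤ ρ) (hρ1 : ρ ≤ 1) :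
    min 1 t ≤ t ^ ρ := by
  rcases le_total 1 t with h | h
  · exact (min_le_left _ _).trans (Real.one_le_rpow h hρ0)
  · exact (min_le_right _ _).trans (Real.self_le_rpow_of_le_one ht h hρ1)

lemma rpow_one_div_one_add_mul_rpow_rpow {a ρ : ℝ} (ha : 0 ≤ a) (hρ : 0 ≤ ρ) :
    a ^ (1 / (1 + ρ)) * (a ^ (1 / (1 + ρ))) ^ ρ = a := by
  rw [← Real.rpow_mul ha, ← Real.rpow_add' ha (by positivity),
    show 1 / (1 + ρ) + 1 / (1 + ρ) * ρ = 1 by field_simp, Real.rpow_one]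

lemma mul_min_one_le_rpow_mul {a u N D ρ : ℝ} (ha : 0 ≤ a) (hu : 0 ≤ u) (hN : 0 ≤ N)
    (hρ0 : 0 ≤ ρ) (hρ1 : ρ ≤ 1) (hND : a ^ (1 / (1 + ρ)) * N ≤ D) :
    a * min 1 (u * N) ≤ u ^ ρ * (a ^ (1 / (1 + ρ)) * D ^ ρ) := by
  calc a * min 1 (u * N) ≤ a * (u * N) ^ ρ :=
        mul_le_mul_of_nonneg_left (min_one_le_rpow (by positivity) hρ0 hρ1) ha
    _ = u ^ ρ * (a ^ (1 / (1 + ρ)) * (a ^ (1 / (1 + ρ)) * N) ^ ρ) := by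
        conv_lhs => rw [← rpow_one_div_one_add_mul_rpow_rpow ha hρ0]
        rw [Real.mul_rpow hu hN, Real.mul_rpow (by positivity) hN]
        ring
    _ ≤ u ^ ρ * (a ^ (1 / (1 + ρ)) * D ^ ρ) := by gcongr

lemma rpow_mul_card_filter_le_sum {ι : Type*} (t : Finset ι) (f : ι → ℝ)
    (hf : ∀ i ∈ t, 0 ≤ f i) {a s : ℝ} (ha : 0 ≤ a) (hs : 0 ≤ s) :
    a ^ s * #{i ∈ t | a ≤ f i} ≤ ∑ i ∈ t, f i ^ s := by
  calc a ^ s * #{i ∈ t | a ≤ f i} = ∑ i ∈ t with a ≤ f i, a ^ s := by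
        rw [sum_const, nsmul_eq_mul, mul_comm]
    _ ≤ ∑ i ∈ t with a ≤ f i, f i ^ s :=
        sum_le_sum fun i hi => Real.rpow_le_rpow ha (mem_filter.1 hi).2 hs
    _ ≤ ∑ i ∈ t, f i ^ s :=
        sum_le_sum_of_subset_of_nonneg (filter_subset _ _) fun i hi _ =>
          Real.rpow_nonneg (hf i hi) s

-- No `BddAbove S` is needed: when `P > 0` the hypothesis bounds `S` by `-log P / c`.
lemma le_exp_neg_mul_sSup {P c : ℝ} {S : Set ℝ} (hc : 0 < c) (hS : S.Nonempty)
    (h : ∀ y ∈ S, P ≤ Real.exp (-c * y)) : P ≤ Real.exp (-c * sSup S) := by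
  rcases le_or_gt P 0 with hP | hP
  · exact hP.trans (Real.exp_pos _).le
  have hsup : sSup S ≤ -Real.log P / c := csSup_le hS fun y hy => by
    have := Real.log_le_log hP (h y hy)
    rw [Real.log_exp] at this
    rw [le_div_iff₀ hc]
    linarith
  rw [le_div_iff₀ hc] at hsup
  calc P = Real.exp (Real.log P) := (Real.exp_log hP).symm
    _ ≤ _ := Real.exp_le_exp.2 (by linarith)

lemma card_sameBin_mul_pow {X : Type*} [Fintype X] [DecidableEq X] {n m k : ℕ} {w x : Fin n → X}
    (hagree : ∀ j : Fin n, (j : ℕ) < k → pref w j = pref x j)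
    (hdiffer : ∀ j : Fin n, k ≤ (j : ℕ) → pref w j ≠ pref x j) :
    Fintype.card {b : BinScheme X n m // sameBin b w x} * m ^ (n - k)
      = Fintype.card (BinScheme X n m) := by
  rw [show Fintype.card {b : BinScheme X n m // sameBin b w x} = _ from
      Fintype.card_congr (Equiv.subtypePiEquivPi
        (p := fun j (g : (Fin (j.val + 1) → X) → Fin m) => g (pref w j) = g (pref x j))),
    Fintype.card_pi, Fintype.card_pi, ← prod_fin_ite_lt_one n k m, ← prod_mul_distrib]
  refine prod_congr rfl fun j _ => ?_
  split_ifs with hj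
  · rw [mul_one, hagree j hj]
    simp
  · convert card_fun_apply_eq_apply_mul (hdiffer j (not_lt.mp hj)) m

section divergesAt

variable {X : Type*} {n l : ℕ} {hl : 1 ≤ l} {w x : Fin n → X}

lemma divergesAt.pref_eq (h : divergesAt w x l hl) (j : Fin n) (hj : (j : ℕ) < l - 1) :
    pref w j = pref x j :=
  funext fun i => h.1 _ (by have := i.isLt; simp only; omega)

lemma divergesAt.pref_ne (h : divergesAt w x l hl) (hln : l ≤ n) (j : Fin n)
    (hj : l - 1 ≤ (j : ℕ)) : pref w j ≠ pref x j :=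
  fun he => h.2 hln (congrFun he ⟨l - 1, by omega⟩)

end divergesAt

lemma card_exists_sameBin_div_card_le {X : Type*} [Fintype X] [DecidableEq X] {n m l : ℕ}
    (hm : 0 < m) (hl1 : 1 ≤ l) (hl2 : l ≤ n) (x : Fin n → X) (S : Finset (Fin n → X))
    (hS : ∀ w ∈ S, divergesAt w x l hl1) :
    (#{b : BinScheme X n m | ∃ w ∈ S, sameBin b w x} : ℝ) / Fintype.card (BinScheme X n m)
      ≤ min 1 (#S * (m : ℝ)⁻¹ ^ (n - (l - 1))) := by
  have : Nonempty (BinScheme X n m) := ⟨fun _ _ => ⟨0, hm⟩⟩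
  have hK : (0 : ℝ) < Fintype.card (BinScheme X n m) := by exact_mod_cast Fintype.card_pos
  have hbin : ∀ w ∈ S, (#{b : BinScheme X n m | sameBin b w x} : ℝ)
      = Fintype.card (BinScheme X n m) * (m : ℝ)⁻¹ ^ (n - (l - 1)) := fun w hw => by
    have h := card_sameBin_mul_pow (m := m) ((hS w hw).pref_eq) ((hS w hw).pref_ne hl2)
    rw [Fintype.card_subtype] at h
    rw [← h, Nat.cast_mul, Nat.cast_pow, inv_pow, mul_inv_cancel_right₀ (by positivity)]
  rw [div_le_iff₀ hK, min_mul_of_nonneg _ _ hK.le, le_min_iff, one_mul]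
  refine ⟨by exact_mod_cast card_le_univ _, ?_⟩
  calc (#{b : BinScheme X n m | ∃ w ∈ S, sameBin b w x} : ℝ)
      ≤ ∑ w ∈ S, (#{b : BinScheme X n m | sameBin b w x} : ℝ) := by
        exact_mod_cast card_filter_exists_le S fun w b => sameBin b w x
    _ = #S * (m : ℝ)⁻¹ ^ (n - (l - 1)) * Fintype.card (BinScheme X n m) := by
        rw [sum_congr rfl hbin, sum_const, nsmul_eq_mul]
        ring

lemma IsPMF.sum_rpow_pos {X : Type*} [Fintype X] {p : X → ℝ} (hp : IsPMF p) (s : ℝ) :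
    0 < ∑ a, p a ^ s := by
  obtain ⟨a, ha⟩ : ∃ a, 0 < p a := by
    by_contra! h
    linarith [hp.2, sum_nonpos fun a (_ : a ∈ univ) => h a]
  exact sum_pos' (fun b _ => Real.rpow_nonneg (hp.1 b) s)
    ⟨a, mem_univ a, Real.rpow_pos_of_pos ha s⟩

lemma IsPMF.sum_prod_rpow_mul_rpow {X : Type*} [Fintype X] {p : X → ℝ} (hp : IsPMF p)
    {ρ : ℝ} (hρ : 0 ≤ ρ) (n k : ℕ) :
    ∑ x : Fin n → X, (∏ i, p (x i)) ^ (1 / (1 + ρ)) * (∏ i : Fin n,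
        if (i : ℕ) < k then p (x i) ^ (1 / (1 + ρ)) else ∑ a, p a ^ (1 / (1 + ρ))) ^ ρ
      = ((∑ a, p a ^ (1 / (1 + ρ))) ^ (1 + ρ)) ^ (n - k) := by
  set s := 1 / (1 + ρ)
  set T := ∑ a, p a ^ s
  have hT : 0 ≤ T := (hp.sum_rpow_pos s).le
  have ht : ∀ (x : Fin n → X) (i : Fin n), 0 ≤ if (i : ℕ) < k then p (x i) ^ s else T :=
    fun x i => by split_ifs; exacts [Real.rpow_nonneg (hp.1 _) s, hT]
  calc _ = ∑ x : Fin n → X, ∏ i : Fin n,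
        if (i : ℕ) < k then p (x i) else p (x i) ^ s * T ^ ρ := by
        refine sum_congr rfl fun x _ => ?_
        rw [← Real.finsetProd_rpow _ _ (fun i _ => hp.1 _),
          ← Real.finsetProd_rpow _ _ (fun i _ => ht x i), ← prod_mul_distrib]
        refine prod_congr rfl fun i _ => ?_
        split_ifs
        · exact rpow_one_div_one_add_mul_rpow_rpow (hp.1 _) hρ
        · rfl
    _ = ∏ i : Fin n, if (i : ℕ) < k then 1 else T ^ (1 + ρ) := by
        rw [← Fintype.prod_sum fun (i : Fin n) (a : X) =>
          if (i : ℕ) < k then p a else p a ^ s * T ^ ρ]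
        refine prod_congr rfl fun i _ => ?_
        split_ifs
        · exact hp.2
        · rw [← sum_mul, Real.rpow_add' hT (by positivity), Real.rpow_one]
    _ = _ := prod_fin_ite_lt_one n k _

section misleading

variable {X : Type*} [Fintype X] {n l : ℕ}

def misleadingSet (p : X → ℝ) (x : Fin n → X) (l : ℕ) (hl : 1 ≤ l) :
    Finset (Fin n → X) :=
  {w | divergesAt w x l hl ∧ ∏ i, p (x i) ≤ ∏ i, p (w i)}

@[simp]
lemma mem_misleadingSet {p : X → ℝ} {x w : Fin n → X} {hl : 1 ≤ l} :
    w ∈ misleadingSet p x l hl ↔ divergesAt w x l hl ∧ ∏ i, p (x i) ≤ ∏ i, p (w i) := by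
  simp [misleadingSet]

lemma rpow_mul_card_misleadingSet_le [DecidableEq X] {p : X → ℝ} (hp : ∀ a, 0 ≤ p a)
    (hl : 1 ≤ l) (x : Fin n → X) {s : ℝ} (hs : 0 ≤ s) :
    (∏ i, p (x i)) ^ s * #(misleadingSet p x l hl)
      ≤ ∏ i : Fin n, if (i : ℕ) < l - 1 then p (x i) ^ s else ∑ a, p a ^ s := by
  have hP : ∀ w : Fin n → X, 0 ≤ ∏ i, p (w i) := fun w => prod_nonneg fun i _ => hp _
  rw [misleadingSet, ← filter_filter]
  calc _ ≤ ∑ w ∈ {w | divergesAt w x l hl}, (∏ i, p (w i)) ^ s :=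
        rpow_mul_card_filter_le_sum _ _ (fun w _ => hP w) (hP x) hs
    _ ≤ ∑ w ∈ {w : Fin n → X | ∀ i : Fin n, (i : ℕ) < l - 1 → w i = x i},
          (∏ i, p (w i)) ^ s :=
        sum_le_sum_of_subset_of_nonneg
          (fun w hw => by
            simp only [mem_filter, mem_univ, true_and] at hw ⊢
            exact fun i hi => hw.1 i (by omega))
          (fun w _ _ => Real.rpow_nonneg (hP w) s)
    _ = _ := by
        simp only [← Real.finsetProd_rpow _ _ (fun i _ => hp _)]
        exact sum_prod_filter_agree (l - 1) x fun a => p a ^ s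

lemma prob_misleading_le [DecidableEq X] {p : X → ℝ} (hp : IsPMF p) {m : ℕ} (hm : 0 < m)
    (hl1 : 1 ≤ l) (hl2 : l ≤ n) {ρ : ℝ} (hρ0 : 0 ≤ ρ) (hρ1 : ρ ≤ 1) :
    prob
      (fun ω : (Fin n → X) × BinScheme X n m =>
        (∏ i, p (ω.1 i)) / (Fintype.card (BinScheme X n m) : ℝ))
      (fun ω => ∃ x' : Fin n → X,
        sameBin ω.2 x' ω.1 ∧ divergesAt x' ω.1 l hl1 ∧
        (∏ i, p (ω.1 i)) ≤ (∏ i, p (x' i)))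
    ≤ Real.exp (-((n : ℝ) - l + 1) *
        (ρ * Real.log m - (1 + ρ) * Real.log (∑ a, p a ^ (1 / (1 + ρ))))) := by
  set s := 1 / (1 + ρ)
  set T := ∑ a, p a ^ s
  set u := (m : ℝ)⁻¹ ^ (n - (l - 1)) with hu
  have hP : ∀ x : Fin n → X, 0 ≤ ∏ i, p (x i) := fun x => prod_nonneg fun i _ => hp.1 _
  have hevent : ∀ (x : Fin n → X) (b : BinScheme X n m),
      (∃ w, sameBin b w x ∧ divergesAt w x l hl1 ∧ ∏ i, p (x i) ≤ ∏ i, p (w i))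
        ↔ ∃ w ∈ misleadingSet p x l hl1, sameBin b w x := fun x b => by
    simp only [mem_misleadingSet, and_comm]
  rw [prob_prod_div_card (fun x => ∏ i, p (x i)) fun x b =>
    ∃ w, sameBin b w x ∧ divergesAt w x l hl1 ∧ ∏ i, p (x i) ≤ ∏ i, p (w i)]
  simp only [hevent]
  calc _ ≤ ∑ x : Fin n → X, (∏ i, p (x i)) * min 1 (u * #(misleadingSet p x l hl1)) := by
        refine sum_le_sum fun x _ => mul_le_mul_of_nonneg_left ?_ (hP x)
        rw [mul_comm u]
        exact card_exists_sameBin_div_card_le hm hl1 hl2 x _ fun w hw =>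
          (mem_misleadingSet.1 hw).1
    _ ≤ ∑ x : Fin n → X, u ^ ρ * ((∏ i, p (x i)) ^ s *
          (∏ i : Fin n, if (i : ℕ) < l - 1 then p (x i) ^ s else T) ^ ρ) :=
        sum_le_sum fun x _ => mul_min_one_le_rpow_mul (hP x) (by positivity) (by positivity)
          hρ0 hρ1 (rpow_mul_card_misleadingSet_le hp.1 hl1 x (by positivity))
    _ = u ^ ρ * (T ^ (1 + ρ)) ^ (n - (l - 1)) := by
        rw [← mul_sum, hp.sum_prod_rpow_mul_rpow hρ0]
    _ = _ := by
        have hT := hp.sum_rpow_pos s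
        rw [hu, ← Real.rpow_natCast, ← Real.rpow_natCast, ← Real.rpow_mul (by positivity),
          ← Real.rpow_mul hT.le, Real.rpow_def_of_pos (by positivity),
          Real.rpow_def_of_pos hT, ← Real.exp_add, Real.log_inv,
          Nat.cast_sub (by omega), Nat.cast_sub hl1]
        congr 1
        push_cast
        ring

end misleading

theorem statement2_general {X : Type*} [Fintype X] [DecidableEq X]
    (p : X → ℝ) (hp : IsPMF p)
    (m : ℕ) (hm : 2 ≤ m) (R : ℝ) (hR : R = Real.log m)
    (n : ℕ) (l : ℕ) (hl1 : 1 ≤ l) (hl2 : l ≤ n) :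
    prob
      (fun ω : (Fin n → X) × BinScheme X n m =>
        (∏ i, p (ω.1 i)) / (Fintype.card (BinScheme X n m) : ℝ))
      (fun ω => ∃ x' : Fin n → X,
        sameBin ω.2 x' ω.1 ∧ divergesAt x' ω.1 l hl1 ∧
        (∏ i, p (ω.1 i)) ≤ (∏ i, p (x' i)))
    ≤ Real.exp (-((n : ℝ) - l + 1) * EML p R) := by
  subst hR
  have hl : (l : ℝ) ≤ n := by exact_mod_cast hl2
  refine le_exp_neg_mul_sSup (by linarith) ((Set.nonempty_Icc.2 zero_le_one).image _) ?_
  rintro _ ⟨ρ, hρ, rfl⟩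
  exact prob_misleading_le hp (by omega) hl1 hl2 hρ.1 hρ.2

/-- Lemma 1: the probability of an ML-misleading string first diverging at position `l`
is at most `exp(−(n−l+1) E_ML(R))`. -/
theorem statement2 {X : Type*} [Fintype X] [DecidableEq X] [Nonempty X]
    (p : X → ℝ) (hp : IsPMF p)
    (m : ℕ) (hm : 2 ≤ m) (R : ℝ) (hR : R = Real.log m)
    (n : ℕ) (hn : 1 ≤ n) (l : ℕ) (hl1 : 1 ≤ l) (hl2 : l ≤ n) :
    prob
      (fun ω : (Fin n → X) × BinScheme X n m =>
        (∏ i, p (ω.1 i)) / (Fintype.card (BinScheme X n m) : ℝ))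
      (fun ω => ∃ x' : Fin n → X,
        sameBin ω.2 x' ω.1 ∧ divergesAt x' ω.1 l hl1 ∧
        (∏ i, p (ω.1 i)) ≤ (∏ i, p (x' i)))
    ≤ Real.exp (-((n : ℝ) - l + 1) * EML p R) :=
  statement2_general p hp m hm R hR n l hl1 hl2
end
end

section
/- The function ρ ↦ (1+ρ)·log Σ_{z∈Z} p(z)^{1/(1+ρ)} is differentiable at every ρ > −1, with derivative at ρ equal to H(p^ρ), the entropy of the tilted distribution p^ρ. -/
/-!
Write `u = 1/(1+ρ)` and `G(u) = log Σ_z p(z)^u`. Then `G'(u)` is the mean of `log p` under the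
tilted distribution, so its entropy is `G(u) - u G'(u)`. The function to differentiate is
`x G(1/x)` at `x = 1+ρ`, whose derivative is `G(1/x) - G'(1/x)/x`: the same expression.
-/

open scoped BigOperators

noncomputable section

/-- The tilted distribution `p^ρ(z) = p(z)^{1/(1+ρ)} / Σ_s p(s)^{1/(1+ρ)}`. -/
def tilted {Z : Type*} [Fintype Z] (p : Z → ℝ) (ρ : ℝ) : Z → ℝ :=
  fun z => p z ^ (1 / (1 + ρ)) / ∑ s, p s ^ (1 / (1 + ρ))

open Real Finset

def escort {Z : Type*} [Fintype Z] (p : Z → ℝ) (u : ℝ) : Z → ℝ :=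
  fun z => p z ^ u / ∑ s, p s ^ u

theorem HasDerivAt.mul_comp_inv {𝕜 : Type*} [NontriviallyNormedField 𝕜] {f : 𝕜 → 𝕜}
    {f' x : 𝕜} (hx : x ≠ 0) (hf : HasDerivAt f f' x⁻¹) :
    HasDerivAt (fun y => y * f y⁻¹) (f x⁻¹ - f' / x) x := by
  have hcomp : HasDerivAt (fun y => f y⁻¹) (f' * -(x ^ 2)⁻¹) x :=
    hf.comp x (hasDerivAt_inv hx)
  refine ((hasDerivAt_id' x).fun_mul hcomp).congr_deriv ?_
  field_simp
  ring

section Escort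

variable {Z : Type*} [Fintype Z] [Nonempty Z] {p : Z → ℝ}

theorem sum_rpow_pos (hp : ∀ z, 0 < p z) (u : ℝ) : 0 < ∑ z, p z ^ u :=
  sum_pos (fun z _ => rpow_pos_of_pos (hp z) u) univ_nonempty

theorem sum_escort (hp : ∀ z, 0 < p z) (u : ℝ) : ∑ z, escort p u z = 1 := by
  simp only [escort, ← sum_div, div_self (sum_rpow_pos hp u).ne']

theorem hasDerivAt_log_sum_rpow (hp : ∀ z, 0 < p z) (u : ℝ) :
    HasDerivAt (fun v => log (∑ z, p z ^ v)) (∑ z, escort p u z * log (p z)) u := by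
  have hsum : HasDerivAt (fun v => ∑ z, p z ^ v) (∑ z, p z ^ u * log (p z)) u :=
    HasDerivAt.fun_sum fun z _ => (hasStrictDerivAt_const_rpow (hp z) u).hasDerivAt
  convert hsum.log (sum_rpow_pos hp u).ne' using 1
  simp only [escort, sum_div, div_mul_eq_mul_div]

theorem entropy_escort (hp : ∀ z, 0 < p z) (u : ℝ) :
    entropy (escort p u) = log (∑ z, p z ^ u) - u * ∑ z, escort p u z * log (p z) := by
  have hlog : ∀ z, log (escort p u z) = u * log (p z) - log (∑ s, p s ^ u) := fun z => by
    rw [escort, log_div (rpow_pos_of_pos (hp z) u).ne' (sum_rpow_pos hp u).ne',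
      log_rpow (hp z)]
  simp only [entropy, hlog, mul_sub, sum_sub_distrib, ← sum_mul, sum_escort hp, mul_sum,
    mul_left_comm _ u]
  ring

end Escort

theorem statement14_general {Z : Type*} [Fintype Z] [Nonempty Z]
    (p : Z → ℝ) (hpos : ∀ z, 0 < p z) (ρ : ℝ) (hρ : -1 < ρ) :
    HasDerivAt (fun σ : ℝ => (1 + σ) * Real.log (∑ z, p z ^ (1 / (1 + σ))))
      (entropy (tilted p ρ)) ρ := by
  have hx : 1 + ρ ≠ 0 := by linarith
  have key := (HasDerivAt.mul_comp_inv hx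
    (hasDerivAt_log_sum_rpow hpos (1 + ρ)⁻¹)).comp_const_add 1 ρ
  simp only [← one_div] at key
  refine key.congr_deriv ?_
  rw [show tilted p ρ = escort p (1 / (1 + ρ)) from rfl, entropy_escort hpos]
  ring

/-- Lemma 14: `d/dρ [(1+ρ) log Σ_z p(z)^{1/(1+ρ)}] = H(p^ρ)`. -/
theorem statement14 {Z : Type*} [Fintype Z] [Nonempty Z]
    (p : Z → ℝ) (hp : IsPMF p) (hpos : ∀ z, 0 < p z) (ρ : ℝ) (hρ : -1 < ρ) :
    HasDerivAt (fun σ : ℝ => (1 + σ) * Real.log (∑ z, p z ^ (1 / (1 + σ))))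
      (entropy (tilted p ρ)) ρ :=
  statement14_general p hpos ρ hρ
end
end
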